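/- Let X be a topological space and let x, y be points of X. Let P_x = {γ : C(I, X) | γ(1) = x} and P_y = {γ : C(I, X) | γ(1) = y} be the spaces of paths in X ending at x and at y respectively, each topologized as a subspace of C(I, X) with the compact-open topology, with structure maps s_x : P_x → X and s_y : P_y → X given by evaluation at 0. Let Map_X(P_x, P_y) = {f : C(P_x, P_y) | for all γ ∈ P_x, f(γ)(0) = γ(0)} be the space of continuous maps over X, topologized as a subspace of the space C(P_x, P_y) of continuous maps with the compact-open topology, and let Π(x, y) = {p : C(I, X) | p(0) = x and p(1) = y} be the space of paths from x to y, topologized as a subspace of C(I, X). Then the map Π(x, y) → Map_X(P_x, P_y) sending a path p from x to y to the map γ ↦ γ · p (concatenation of γ with p, a path starting at γ(0) and ending at y) is well-defined, continuous, and a homotopy equivalence. -/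
import Mathlib


/-- The space of continuous paths in `X` ending at `x`, as a subspace of `C(I, X)` with the
compact-open topology. -/
abbrev PathsEndingAt (X : Type*) [TopologicalSpace X] (x : X) : Type _ :=
  {γ : C(unitInterval, X) // γ 1 = x}

/-- The space of continuous paths in `X` from `x` to `y`, as a subspace of `C(I, X)`. -/
abbrev PathsBetween (X : Type*) [TopologicalSpace X] (x y : X) : Type _ :=
  {p : C(unitInterval, X) // p 0 = x ∧ p 1 = y}

/-- The space of continuous maps `P_x → P_y` over `X`, i.e. commuting with the
evaluation-at-`0` maps to `X`, as a subspace of `C(P_x, P_y)`. -/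
abbrev MapsOverX (X : Type*) [TopologicalSpace X] (x y : X) : Type _ :=
  {f : C(PathsEndingAt X x, PathsEndingAt X y) //
    ∀ γ : PathsEndingAt X x, (f γ).1 0 = γ.1 0}

noncomputable section
namespace PathYonedaAux

open Set

/-- Clamp a real number into the unit interval. -/
def clamp (r : ℝ) : unitInterval := Set.projIcc 0 1 zero_le_one r

lemma continuous_clamp : Continuous clamp := continuous_projIcc (h := zero_le_one)

lemma clamp_coe (s : unitInterval) : clamp (s : ℝ) = s := by
  simp only [clamp, Set.projIcc_of_mem zero_le_one s.2]

lemma clamp_of_nonpos {r : ℝ} (h : r ≤ 0) : clamp r = 0 := by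
  rw [clamp, Set.projIcc_of_le_left zero_le_one h]; rfl

lemma clamp_of_one_le {r : ℝ} (h : 1 ≤ r) : clamp r = 1 := by
  rw [clamp, Set.projIcc_of_right_le zero_le_one h]; rfl

lemma clamp_zero : clamp (0 : ℝ) = 0 := clamp_of_nonpos le_rfl
lemma clamp_one : clamp (1 : ℝ) = 1 := clamp_of_one_le le_rfl

/-- The key continuity lemma: a homotopy-style family built from a single evaluation of the
function variable is continuous in the compact-open topology. -/
theorem key {A B Cc : Type*} [TopologicalSpace A] [TopologicalSpace B] [TopologicalSpace Cc]
    (P : C(A, B) → Prop) (r : C(unitInterval × A, A)) (D : Set (unitInterval × A × B))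
    (Q : C(D, Cc))
    (hmem : ∀ (f : C(A, B)), P f → ∀ (t : unitInterval) (γ : A), (t, γ, f (r (t, γ))) ∈ D)
    (k : unitInterval × {f : C(A, B) // P f} → C(A, Cc))
    (hk : ∀ q γ, k q γ = Q ⟨(q.1, γ, q.2.1 (r (q.1, γ))), hmem q.2.1 q.2.2 q.1 γ⟩) :
    Continuous k := by
  classical
  rw [continuous_iff_continuousAt]
  rintro ⟨t₀, f₀⟩
  show Filter.Tendsto k (nhds (t₀, f₀)) (nhds (k (t₀, f₀)))
  rw [ContinuousMap.tendsto_nhds_compactOpen]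
  intro K hK U hU hKU
  set e : unitInterval × A → B := fun z => f₀.1 (r z) with he
  have he_cont : Continuous e := f₀.1.continuous.comp r.continuous
  have hdata : ∀ γ ∈ K, ∃ T O Ω, IsOpen T ∧ IsOpen O ∧ IsOpen Ω ∧ t₀ ∈ T ∧ γ ∈ O ∧
      (∀ t' γ', t' ∈ T → γ' ∈ O → e (t', γ') ∈ Ω) ∧
      (∀ (t' : unitInterval) (γ' : A) (b : B) (hD : (t', γ', b) ∈ D),
        t' ∈ T → γ' ∈ O → b ∈ Ω → Q ⟨(t', γ', b), hD⟩ ∈ U) := by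
    intro γ hγ
    have hd₀ : (t₀, γ, e (t₀, γ)) ∈ D := hmem f₀.1 f₀.2 t₀ γ
    have hQU : Q ⟨(t₀, γ, e (t₀, γ)), hd₀⟩ ∈ U := by
      have h := hKU hγ
      rwa [hk] at h
    have h1 : Q ⁻¹' U ∈ nhds (⟨(t₀, γ, e (t₀, γ)), hd₀⟩ : D) :=
      Q.continuous.continuousAt (hU.mem_nhds hQU)
    rw [nhds_subtype_eq_comap, Filter.mem_comap] at h1
    obtain ⟨G, hG, hGsub⟩ := h1
    rw [mem_nhds_prod_iff'] at hG
    obtain ⟨T₁, V, hT₁, ht₀, hV, hmemV, hTV⟩ := hG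
    obtain ⟨O₁, Ω₁, hO₁, hΩ₁, hγO₁, heΩ₁, hOΩsub⟩ :=
      (isOpen_prod_iff.mp hV) γ (e (t₀, γ)) hmemV
    have h2 : e ⁻¹' Ω₁ ∈ nhds (t₀, γ) :=
      he_cont.continuousAt.preimage_mem_nhds (hΩ₁.mem_nhds heΩ₁)
    rw [mem_nhds_prod_iff'] at h2
    obtain ⟨T₂, O₂, hT₂, ht₀₂, hO₂, hγ₂, hsub₂⟩ := h2
    refine ⟨T₁ ∩ T₂, O₁ ∩ O₂, Ω₁, hT₁.inter hT₂, hO₁.inter hO₂, hΩ₁,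
      ⟨ht₀, ht₀₂⟩, ⟨hγO₁, hγ₂⟩, ?_, ?_⟩
    · intro t' γ' ht' hγ'
      exact hsub₂ (Set.mk_mem_prod ht'.2 hγ'.2)
    · intro t' γ' b hD ht' hγ' hb
      apply hGsub
      show ((t', γ', b) : unitInterval × A × B) ∈ G
      exact hTV (Set.mk_mem_prod ht'.1 (hOΩsub (Set.mk_mem_prod hγ'.1 hb)))
  choose T O Ω hTo hOo hΩo ht₀T hγO heΩ hQin using hdata
  have hcover : K ⊆ ⋃ i : K, O i i.2 := fun γ hγ => Set.mem_iUnion.2 ⟨⟨γ, hγ⟩, hγO γ hγ⟩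
  obtain ⟨F, hF⟩ := hK.elim_finite_subcover (fun i : K => O i i.2) (fun i => hOo i i.2) hcover
  have hTopen : IsOpen (⋂ i ∈ F, T i.1 i.2) := isOpen_biInter_finset fun i _ => hTo i.1 i.2
  have ht₀T' : t₀ ∈ ⋂ i ∈ F, T i.1 i.2 := Set.mem_iInter₂.mpr fun i _ => ht₀T i.1 i.2
  obtain ⟨J, hJn, hJsub, hJc⟩ := local_compact_nhds (hTopen.mem_nhds ht₀T')
  set KS : Finset K → Set A := fun S => K \ ⋃ i ∈ F \ S, O i.1 i.2 with hKSdef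
  set N : Set C(A, B) :=
    ⋂ S ∈ F.powerset,
      {g : C(A, B) | Set.MapsTo g (r '' (J ×ˢ KS S)) (⋃ i ∈ S, Ω i.1 i.2)} with hNdef
  have hNopen : IsOpen N := by
    refine isOpen_biInter_finset fun S _ => ?_
    exact ContinuousMap.isOpen_setOf_mapsTo
      ((hJc.prod (hK.diff (isOpen_biUnion fun i _ => hOo i.1 i.2))).image r.continuous)
      (isOpen_biUnion fun i _ => hΩo i.1 i.2)
  have hf₀ : f₀.1 ∈ N := by
    refine Set.mem_iInter₂.mpr fun S _ => ?_
    rintro b ⟨⟨t', γ'⟩, hmem', rfl⟩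
    obtain ⟨htJ, hγKS⟩ := hmem'
    have hγK : γ' ∈ K := hγKS.1
    obtain ⟨i, hiF, hγOi⟩ : ∃ i ∈ F, γ' ∈ O i.1 i.2 := by
      have h := hF hγK
      simpa using h
    have hiS : i ∈ S := by
      by_contra hcon
      exact hγKS.2 (Set.mem_biUnion (Finset.mem_sdiff.mpr ⟨hiF, hcon⟩) hγOi)
    have htT : t' ∈ T i.1 i.2 := Set.mem_iInter₂.mp (hJsub htJ) i hiF
    exact Set.mem_biUnion hiS (heΩ i.1 i.2 t' γ' htT hγOi)
  have hNnhds : (interior J ×ˢ (Subtype.val ⁻¹' N) :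
      Set (unitInterval × {f : C(A, B) // P f})) ∈ nhds (t₀, f₀) :=
    prod_mem_nhds (interior_mem_nhds.mpr hJn)
      ((hNopen.preimage continuous_subtype_val).mem_nhds hf₀)
  filter_upwards [hNnhds]
  rintro ⟨t, f⟩ ⟨htJ, hfN⟩
  intro γ hγK
  rw [hk]
  set Sγ : Finset K := F.filter (fun i => γ ∈ O i.1 i.2) with hSγdef
  have hSγp : Sγ ∈ F.powerset := Finset.mem_powerset.mpr (Finset.filter_subset _ _)
  have hγKS : γ ∈ KS Sγ := by
    refine ⟨hγK, fun hcon => ?_⟩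
    rw [Set.mem_iUnion₂] at hcon
    obtain ⟨i, hi, hOi⟩ := hcon
    obtain ⟨hiF, hiS⟩ := Finset.mem_sdiff.mp hi
    exact hiS (Finset.mem_filter.mpr ⟨hiF, hOi⟩)
  have hb : f.1 (r (t, γ)) ∈ ⋃ i ∈ Sγ, Ω i.1 i.2 :=
    (Set.mem_iInter₂.mp hfN Sγ hSγp)
      ⟨(t, γ), Set.mk_mem_prod (interior_subset htJ) hγKS, rfl⟩
  rw [Set.mem_iUnion₂] at hb
  obtain ⟨i, hiSγ, hbΩ⟩ := hb
  obtain ⟨hiF, hγOi⟩ := Finset.mem_filter.mp hiSγ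
  have htT : t ∈ T i.1 i.2 := Set.mem_iInter₂.mp (hJsub (interior_subset htJ)) i hiF
  exact hQin i.1 i.2 t γ (f.1 (r (t, γ))) (hmem f.1 f.2 t γ) htT hγOi hbΩ


variable (X : Type*) [TopologicalSpace X] (x y : X)

/-- The constant path at `x`, as an element of `P_x`. -/
def cpath : PathsEndingAt X x := ⟨ContinuousMap.const _ x, rfl⟩

/-- The two-variable version of the "tail" restriction map. -/
def tailCM : C((unitInterval × PathsEndingAt X x) × unitInterval, X) :=
  ⟨fun z => z.1.2.1 (clamp ((z.1.1 : ℝ) + (z.2 : ℝ) * (1 - (z.1.1 : ℝ)))),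
    Continuous.eval (continuous_subtype_val.comp (continuous_snd.comp continuous_fst))
      (continuous_clamp.comp (by fun_prop))⟩

lemma tail_prop (z : unitInterval × PathsEndingAt X x) : ((tailCM X x).curry z) 1 = x := by
  show z.2.1 (clamp ((z.1 : ℝ) + ((1 : unitInterval) : ℝ) * (1 - (z.1 : ℝ)))) = x
  rw [show ((z.1 : ℝ) + ((1 : unitInterval) : ℝ) * (1 - (z.1 : ℝ))) = (1 : ℝ) by
    push_cast; ring, clamp_one]
  exact z.2.2

/-- The tail restriction map `I × P_x → P_x`, `(t, γ) ↦ γ (t + ·(1-t))`. -/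
def tailFun : C(unitInterval × PathsEndingAt X x, PathsEndingAt X x) :=
  ⟨fun z => ⟨(tailCM X x).curry z, tail_prop X x z⟩,
    ((tailCM X x).curry.continuous).subtype_mk _⟩

/-- The matching set: triples `(t, γ, δ)` with `δ 0 = γ t`. -/
def DD : Set (unitInterval × PathsEndingAt X x × PathsEndingAt X y) :=
  {z | z.2.2.1 0 = z.2.1.1 z.1}

/-- Two-variable version of the gluing map. -/
def QCM : C((DD X x y) × unitInterval, X) :=
  ⟨fun w => if ((w.2 : ℝ)) ≤ (w.1.1.1 : ℝ) / 2
      then w.1.1.2.1.1 (clamp (2 * (w.2 : ℝ)))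
      else w.1.1.2.2.1 (clamp (((w.2 : ℝ) - (w.1.1.1 : ℝ) / 2) / (1 - (w.1.1.1 : ℝ) / 2))), by
    apply Continuous.if_le
    · exact Continuous.eval
        (continuous_subtype_val.comp (continuous_fst.comp (continuous_snd.comp
          (continuous_subtype_val.comp continuous_fst))))
        (continuous_clamp.comp (by fun_prop))
    · apply Continuous.eval
        (continuous_subtype_val.comp (continuous_snd.comp (continuous_snd.comp
          (continuous_subtype_val.comp continuous_fst))))
      apply continuous_clamp.comp
      apply Continuous.div
      · fun_prop
      · fun_prop
      · intro w
        have h1 := (w.1.1.1).2.1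
        have h2 := (w.1.1.1).2.2
        intro hcon
        nlinarith
    · fun_prop
    · fun_prop
    · intro w h
      rw [show (2 * (w.2 : ℝ)) = ((w.1.1.1 : ℝ)) by rw [h]; ring,
        show (((w.2 : ℝ) - (w.1.1.1 : ℝ) / 2) / (1 - (w.1.1.1 : ℝ) / 2)) = 0 by
          rw [h, sub_self, zero_div],
        clamp_zero, clamp_coe]
      exact (w.1.2).symm⟩

/-- The gluing map `D → P_y`: concatenate `γ|[0,t]` (at double speed on `[0, t/2]`)
with `δ` (rescaled on `[t/2, 1]`). -/
lemma Q_prop (w : DD X x y) : ((QCM X x y).curry w) 1 = y := by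
  show (if (((1 : unitInterval) : ℝ)) ≤ (w.1.1 : ℝ) / 2
    then w.1.2.1.1 (clamp (2 * ((1 : unitInterval) : ℝ)))
    else w.1.2.2.1 (clamp ((((1 : unitInterval) : ℝ) - (w.1.1 : ℝ) / 2) /
      (1 - (w.1.1 : ℝ) / 2)))) = y
  have ht := (w.1.1).2.2
  have ht0 := (w.1.1).2.1
  rw [if_neg (by push_cast; intro hcon; nlinarith),
    show ((((1 : unitInterval) : ℝ) - (w.1.1 : ℝ) / 2) / (1 - (w.1.1 : ℝ) / 2)) = 1 by
      push_cast
      rw [div_eq_one_iff_eq (by nlinarith)],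
    clamp_one]
  exact w.1.2.2.2

/-- The gluing map `D → P_y`: concatenate `γ|[0,t]` (at double speed on `[0, t/2]`)
with `δ` (rescaled on `[t/2, 1]`). -/
def Qmap : C(DD X x y, PathsEndingAt X y) :=
  ⟨fun w => ⟨(QCM X x y).curry w, Q_prop X x y w⟩,
    ((QCM X x y).curry.continuous).subtype_mk _⟩

lemma hmemD (f : C(PathsEndingAt X x, PathsEndingAt X y))
    (hf : ∀ γ, (f γ).1 0 = γ.1 0) (t : unitInterval) (γ : PathsEndingAt X x) :
    (t, γ, f (tailFun X x (t, γ))) ∈ DD X x y := by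
  show (f (tailFun X x (t, γ))).1 0 = γ.1 t
  rw [hf]
  show γ.1 (clamp ((t : ℝ) + ((0 : unitInterval) : ℝ) * (1 - (t : ℝ)))) = γ.1 t
  rw [show ((t : ℝ) + ((0 : unitInterval) : ℝ) * (1 - (t : ℝ))) = (t : ℝ) by push_cast; ring,
    clamp_coe]

/-- Two-variable version of the concatenation defining `Φ`. -/
def transCM : C((PathsBetween X x y × PathsEndingAt X x) × unitInterval, X) :=
  ⟨fun z => if ((z.2 : ℝ)) ≤ 1 / 2 then z.1.2.1 (clamp (2 * (z.2 : ℝ)))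
      else z.1.1.1 (clamp (2 * (z.2 : ℝ) - 1)), by
    apply Continuous.if_le
    · exact Continuous.eval (continuous_subtype_val.comp (continuous_snd.comp continuous_fst))
        (continuous_clamp.comp (by fun_prop))
    · exact Continuous.eval (continuous_subtype_val.comp (continuous_fst.comp continuous_fst))
        (continuous_clamp.comp (by fun_prop))
    · fun_prop
    · fun_prop
    · intro z h
      rw [show (2 * (z.2 : ℝ)) = (1 : ℝ) by rw [h]; ring]
      norm_num [clamp_one, clamp_zero, z.1.2.2, z.1.1.2.1]⟩

lemma G2_prop (q : PathsBetween X x y × PathsEndingAt X x) : ((transCM X x y).curry q) 1 = y := by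
  show (if (((1 : unitInterval) : ℝ)) ≤ 1 / 2 then q.2.1 (clamp (2 * ((1 : unitInterval) : ℝ)))
    else q.1.1 (clamp (2 * ((1 : unitInterval) : ℝ) - 1))) = y
  rw [if_neg (by push_cast; norm_num),
    show (2 * ((1 : unitInterval) : ℝ) - 1) = (1 : ℝ) by push_cast; ring, clamp_one]
  exact q.1.2.2

/-- The concatenation map `P_x → P_y` associated with `p : Π(x,y)`. -/
def G2 : C(PathsBetween X x y × PathsEndingAt X x, PathsEndingAt X y) :=
  ⟨fun q => ⟨(transCM X x y).curry q, G2_prop X x y q⟩,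
    ((transCM X x y).curry.continuous).subtype_mk _⟩

lemma Phi_overX (p : PathsBetween X x y) (γ : PathsEndingAt X x) :
    ((G2 X x y).curry p γ).1 0 = γ.1 0 := by
  show (if (((0 : unitInterval) : ℝ)) ≤ 1 / 2 then γ.1 (clamp (2 * ((0 : unitInterval) : ℝ)))
    else p.1 (clamp (2 * ((0 : unitInterval) : ℝ) - 1))) = γ.1 0
  rw [if_pos (by push_cast; norm_num),
    show (2 * ((0 : unitInterval) : ℝ)) = (0 : ℝ) by push_cast; ring, clamp_zero]

/-- The Yoneda map `Φ`. -/
def PhiMap : C(PathsBetween X x y, MapsOverX X x y) :=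
  ⟨fun p => ⟨(G2 X x y).curry p, Phi_overX X x y p⟩,
    ((G2 X x y).curry.continuous).subtype_mk _⟩

lemma Phi_formula (p : PathsBetween X x y) (γ : PathsEndingAt X x) :
    (((PhiMap X x y) p).1 γ).1 =
      (Path.trans (⟨γ.1, rfl, γ.2⟩ : Path (γ.1 0) x)
        (⟨p.1, p.2.1, p.2.2⟩ : Path x y)).toContinuousMap := by
  ext s
  show transCM X x y ((p, γ), s) =
    ((⟨γ.1, rfl, γ.2⟩ : Path (γ.1 0) x).trans (⟨p.1, p.2.1, p.2.2⟩ : Path x y)) s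
  rw [Path.trans_apply]
  show (if ((s : ℝ)) ≤ 1 / 2 then γ.1 (clamp (2 * (s : ℝ)))
    else p.1 (clamp (2 * (s : ℝ) - 1))) = _
  by_cases h : (s : ℝ) ≤ 1 / 2
  · rw [if_pos h, dif_pos h]
    show γ.1 _ = γ.1 _
    congr 1
    rw [clamp, Set.projIcc_of_mem zero_le_one ⟨by nlinarith [s.2.1], by nlinarith⟩]
  · rw [if_neg h, dif_neg h]
    show p.1 _ = p.1 _
    congr 1
    rw [clamp, Set.projIcc_of_mem zero_le_one ⟨by nlinarith [not_le.mp h], by nlinarith [s.2.2]⟩]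

/-- The inverse-up-to-homotopy `Ψ`: evaluate at the constant path. -/
def PsiMap : C(MapsOverX X x y, PathsBetween X x y) :=
  ⟨fun f => ⟨(f.1 (cpath X x)).1, by rw [f.2 (cpath X x)]; rfl, (f.1 (cpath X x)).2⟩, by
    apply Continuous.subtype_mk
    exact continuous_subtype_val.comp
      ((continuous_eval_const (cpath X x)).comp continuous_subtype_val)⟩

/-- The underlying function of the big homotopy on `Map_X(P_x, P_y)`. -/
def h2fun (q : unitInterval × MapsOverX X x y) : C(PathsEndingAt X x, PathsEndingAt X y) :=
  ⟨fun γ => Qmap X x y ⟨(q.1, γ, q.2.1 (tailFun X x (q.1, γ))),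
      hmemD X x y q.2.1 q.2.2 q.1 γ⟩, by
    apply (Qmap X x y).continuous.comp
    apply Continuous.subtype_mk
    exact continuous_const.prodMk (continuous_id.prodMk
      (q.2.1.continuous.comp ((tailFun X x).continuous.comp
        (continuous_const.prodMk continuous_id))))⟩

lemma h2_overX (q : unitInterval × MapsOverX X x y) (γ : PathsEndingAt X x) :
    (h2fun X x y q γ).1 0 = γ.1 0 := by
  show (if (((0 : unitInterval) : ℝ)) ≤ (q.1 : ℝ) / 2 then γ.1 (clamp (2 * ((0 : unitInterval) : ℝ)))
    else (q.2.1 (tailFun X x (q.1, γ))).1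
      (clamp ((((0 : unitInterval) : ℝ) - (q.1 : ℝ) / 2) / (1 - (q.1 : ℝ) / 2)))) = γ.1 0
  rw [if_pos (by push_cast; exact div_nonneg q.1.2.1 (by norm_num)),
    show (2 * ((0 : unitInterval) : ℝ)) = (0 : ℝ) by push_cast; ring, clamp_zero]

/-- The big homotopy as a function into `Map_X`. -/
def h2Map (q : unitInterval × MapsOverX X x y) : MapsOverX X x y :=
  ⟨h2fun X x y q, h2_overX X x y q⟩

lemma h2fun_cont : Continuous (h2fun X x y) :=
  key (fun f : C(PathsEndingAt X x, PathsEndingAt X y) =>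
      ∀ γ : PathsEndingAt X x, (f γ).1 0 = γ.1 0)
    (tailFun X x) (DD X x y) (Qmap X x y) (fun f hf t γ => hmemD X x y f hf t γ)
    (h2fun X x y) (fun q γ => rfl)

/-- Two-variable version of the homotopy `Ψ ∘ Φ ≃ id`. -/
def h1CM : C((unitInterval × PathsBetween X x y) × unitInterval, X) :=
  ⟨fun z => z.1.2.1 (clamp ((2 - (z.1.1 : ℝ)) * (z.2 : ℝ) - (1 - (z.1.1 : ℝ)))),
    Continuous.eval (continuous_subtype_val.comp (continuous_snd.comp continuous_fst))
      (continuous_clamp.comp (by fun_prop))⟩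

lemma h1_prop (q : unitInterval × PathsBetween X x y) :
    ((h1CM X x y).curry q) 0 = x ∧ ((h1CM X x y).curry q) 1 = y := by
  constructor
  · show q.2.1 (clamp ((2 - (q.1 : ℝ)) * ((0 : unitInterval) : ℝ) - (1 - (q.1 : ℝ)))) = x
    rw [show ((2 - (q.1 : ℝ)) * ((0 : unitInterval) : ℝ) - (1 - (q.1 : ℝ))) = (q.1 : ℝ) - 1 by
      push_cast; ring, clamp_of_nonpos (by nlinarith [q.1.2.2])]
    exact q.2.2.1
  · show q.2.1 (clamp ((2 - (q.1 : ℝ)) * ((1 : unitInterval) : ℝ) - (1 - (q.1 : ℝ)))) = y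
    rw [show ((2 - (q.1 : ℝ)) * ((1 : unitInterval) : ℝ) - (1 - (q.1 : ℝ))) = (1 : ℝ) by
      push_cast; ring, clamp_one]
    exact q.2.2.2

/-- The homotopy `Ψ ∘ Φ ≃ id` as a function. -/
def h1fun (q : unitInterval × PathsBetween X x y) : PathsBetween X x y :=
  ⟨(h1CM X x y).curry q, h1_prop X x y q⟩

/-- The homotopy `Ψ ∘ Φ ≃ id`. -/
def H1 : ContinuousMap.Homotopy ((PsiMap X x y).comp (PhiMap X x y))
    (ContinuousMap.id (PathsBetween X x y)) where
  toFun := h1fun X x y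
  continuous_toFun := ((h1CM X x y).curry.continuous).subtype_mk _
  map_zero_left := fun p => by
    apply Subtype.ext
    apply ContinuousMap.ext
    intro s
    show p.1 (clamp ((2 - ((0 : unitInterval) : ℝ)) * (s : ℝ) - (1 - ((0 : unitInterval) : ℝ)))) =
      (if ((s : ℝ)) ≤ 1 / 2 then (cpath X x).1 (clamp (2 * (s : ℝ)))
        else p.1 (clamp (2 * (s : ℝ) - 1)))
    rw [show ((2 - ((0 : unitInterval) : ℝ)) * (s : ℝ) - (1 - ((0 : unitInterval) : ℝ)))
        = 2 * (s : ℝ) - 1 by push_cast; ring]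
    by_cases h : (s : ℝ) ≤ 1 / 2
    · rw [if_pos h, clamp_of_nonpos (by linarith)]
      exact p.2.1
    · rw [if_neg h]
  map_one_left := fun p => by
    apply Subtype.ext
    apply ContinuousMap.ext
    intro s
    show p.1 (clamp ((2 - ((1 : unitInterval) : ℝ)) * (s : ℝ) - (1 - ((1 : unitInterval) : ℝ)))) =
      p.1 s
    rw [show ((2 - ((1 : unitInterval) : ℝ)) * (s : ℝ) - (1 - ((1 : unitInterval) : ℝ)))
      = (s : ℝ) by push_cast; ring, clamp_coe]

/-- The homotopy `id ≃ Φ ∘ Ψ`. -/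
def H2 : ContinuousMap.Homotopy (ContinuousMap.id (MapsOverX X x y))
    ((PhiMap X x y).comp (PsiMap X x y)) where
  toFun := h2Map X x y
  continuous_toFun := (h2fun_cont X x y).subtype_mk _
  map_zero_left := fun f => by
    apply Subtype.ext; apply ContinuousMap.ext; intro γ; apply Subtype.ext
    apply ContinuousMap.ext; intro s
    have htail : tailFun X x ((0 : unitInterval), γ) = γ := by
      apply Subtype.ext; apply ContinuousMap.ext; intro u
      show γ.1 (clamp (((0 : unitInterval) : ℝ) + (u : ℝ) * (1 - ((0 : unitInterval) : ℝ)))) =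
        γ.1 u
      rw [show (((0 : unitInterval) : ℝ) + (u : ℝ) * (1 - ((0 : unitInterval) : ℝ))) = (u : ℝ) by
        push_cast; ring, clamp_coe]
    show (if ((s : ℝ)) ≤ ((0 : unitInterval) : ℝ) / 2 then γ.1 (clamp (2 * (s : ℝ)))
      else (f.1 (tailFun X x ((0 : unitInterval), γ))).1
        (clamp (((s : ℝ) - ((0 : unitInterval) : ℝ) / 2) / (1 - ((0 : unitInterval) : ℝ) / 2))))
      = (f.1 γ).1 s
    rw [htail]
    by_cases h : (s : ℝ) ≤ ((0 : unitInterval) : ℝ) / 2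
    · rw [if_pos h]
      have hs : s = (0 : unitInterval) := by
        apply Subtype.ext
        push_cast at h ⊢
        exact le_antisymm (by linarith) s.2.1
      rw [hs, show (2 * (((0 : unitInterval)) : ℝ)) = (0 : ℝ) by push_cast; ring, clamp_zero]
      exact (f.2 γ).symm
    · rw [if_neg h]
      congr 1
      rw [show (((s : ℝ) - ((0 : unitInterval) : ℝ) / 2) / (1 - ((0 : unitInterval) : ℝ) / 2))
        = (s : ℝ) by push_cast; norm_num, clamp_coe]
  map_one_left := fun f => by
    apply Subtype.ext; apply ContinuousMap.ext; intro γ; apply Subtype.ext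
    apply ContinuousMap.ext; intro s
    have htail : tailFun X x ((1 : unitInterval), γ) = cpath X x := by
      apply Subtype.ext; apply ContinuousMap.ext; intro u
      show γ.1 (clamp (((1 : unitInterval) : ℝ) + (u : ℝ) * (1 - ((1 : unitInterval) : ℝ)))) = x
      rw [show (((1 : unitInterval) : ℝ) + (u : ℝ) * (1 - ((1 : unitInterval) : ℝ))) = (1 : ℝ) by
        push_cast; ring, clamp_one]
      exact γ.2
    show (if ((s : ℝ)) ≤ ((1 : unitInterval) : ℝ) / 2 then γ.1 (clamp (2 * (s : ℝ)))
      else (f.1 (tailFun X x ((1 : unitInterval), γ))).1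
        (clamp (((s : ℝ) - ((1 : unitInterval) : ℝ) / 2) / (1 - ((1 : unitInterval) : ℝ) / 2))))
      = (if ((s : ℝ)) ≤ 1 / 2 then γ.1 (clamp (2 * (s : ℝ)))
        else (f.1 (cpath X x)).1 (clamp (2 * (s : ℝ) - 1)))
    rw [htail, show (((1 : unitInterval)) : ℝ) = (1 : ℝ) by push_cast; ring]
    by_cases h : (s : ℝ) ≤ 1 / 2
    · rw [if_pos h, if_pos h]
    · rw [if_neg h, if_neg h]
      congr 1
      rw [show (((s : ℝ) - (1 : ℝ) / 2) / (1 - (1 : ℝ) / 2)) = 2 * (s : ℝ) - 1 by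
        rw [div_eq_iff (by norm_num)]; ring]

end PathYonedaAux


/-- **Yoneda lemma for spaces.** The map `Π(x, y) → Map_X(P_x, P_y)` sending a path `p` from
`x` to `y` to the map `γ ↦ γ · p` (concatenation) is well-defined, continuous (it lifts to a
bundled continuous map `Φ`), and a homotopy equivalence (it admits a continuous homotopy
inverse `Ψ`). -/
theorem pathSpace_yoneda (X : Type*) [TopologicalSpace X] (x y : X) :
    ∃ (Φ : C(PathsBetween X x y, MapsOverX X x y))
      (Ψ : C(MapsOverX X x y, PathsBetween X x y)),
      (∀ (p : PathsBetween X x y) (γ : PathsEndingAt X x),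
        ((Φ p).1 γ).1 =
          (Path.trans (⟨γ.1, rfl, γ.2⟩ : Path (γ.1 0) x)
            (⟨p.1, p.2.1, p.2.2⟩ : Path x y)).toContinuousMap) ∧
      ContinuousMap.Homotopic (Ψ.comp Φ) (ContinuousMap.id (PathsBetween X x y)) ∧
      ContinuousMap.Homotopic (Φ.comp Ψ) (ContinuousMap.id (MapsOverX X x y)) := by
  exact ⟨PathYonedaAux.PhiMap X x y, PathYonedaAux.PsiMap X x y,
    PathYonedaAux.Phi_formula X x y, ⟨PathYonedaAux.H1 X x y⟩, ⟨(PathYonedaAux.H2 X x y).symm⟩⟩
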